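/- Let H and K be real Hilbert spaces and T : H →L[ℝ] K a bounded linear operator with ‖T‖ ≤ 1. Let β > 0, w₀ ∈ H, and h₀ = (T*T)^{β/2} w₀, where the fractional power of T*T is defined via the continuous functional calculus. For λ > 0 define h_{*,0} = 0 and h_{*,t} = (T*T + λ·id)⁻¹ (T*T h₀ + λ h_{*,t−1}) for integers t ≥ 1. Then for every t ≥ 1, ‖h_{*,t} − h₀‖² ≤ ‖w₀‖² · λ^{min(β, 2t)}. -/

import Mathlib

/-!
With `A = T*T` and the filter `r(s) = λ / (s + λ)`, one Tikhonov step multiplies the error by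
`r(A)`, so `h_{*,t} - h₀ = -r(A)^t A^{β/2} w₀` and `‖h_{*,t} - h₀‖ ≤ sup ‖w₀‖ r(s)^t s^{β/2}` over
`σ(A) ⊆ [0, 1]`. For `c = min(β/2, t)` and `s ∈ [0, 1]` one has
`r(s)^t s^{β/2} ≤ (r(s) s)^c ≤ λ^c`, since `r ≤ 1`, `s ≤ 1` and `r(s) s ≤ λ`.
-/

open ContinuousLinearMap
open scoped RealInnerProductSpace

lemma tikhonov_filter_sq_le {β lam x : ℝ} (t : ℕ) (hβ : 0 ≤ β) (hlam : 0 ≤ lam)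
    (hx₀ : 0 ≤ x) (hx₁ : x ≤ 1) :
    ((lam / (x + lam)) ^ t * x ^ (β / 2)) ^ 2 ≤ lam ^ min β (2 * (t : ℝ)) := by
  set c := min β (2 * (t : ℝ)) / 2 with hc
  have hc₀ : 0 ≤ c := by positivity
  have hcβ : c ≤ β / 2 := by linarith [min_le_left β (2 * (t : ℝ))]
  have hct : c ≤ t := by linarith [min_le_right β (2 * (t : ℝ))]
  have hr₀ : 0 ≤ lam / (x + lam) := by positivity
  have hr₁ : lam / (x + lam) ≤ 1 := div_le_one_of_le₀ (by linarith) (by positivity)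
  have hrx : lam / (x + lam) * x ≤ lam := by
    rw [div_mul_eq_mul_div, mul_div_assoc]
    exact mul_le_of_le_one_right hlam (div_le_one_of_le₀ (by linarith) (by positivity))
  have hbound : (lam / (x + lam)) ^ t * x ^ (β / 2) ≤ lam ^ c := calc
    (lam / (x + lam)) ^ t * x ^ (β / 2) ≤ (lam / (x + lam)) ^ c * x ^ c := by
      rw [← Real.rpow_natCast]
      exact mul_le_mul (Real.rpow_le_rpow_of_exponent_ge' hr₀ hr₁ hc₀ hct)
        (Real.rpow_le_rpow_of_exponent_ge' hx₀ hx₁ hc₀ hcβ) (by positivity) (by positivity)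
    _ = (lam / (x + lam) * x) ^ c := (Real.mul_rpow hr₀ hx₀).symm
    _ ≤ lam ^ c := Real.rpow_le_rpow (by positivity) hrx hc₀
  calc ((lam / (x + lam)) ^ t * x ^ (β / 2)) ^ 2 ≤ (lam ^ c) ^ 2 :=
      pow_le_pow_left₀ (by positivity) hbound 2
    _ = lam ^ min β (2 * (t : ℝ)) := by
      rw [← Real.rpow_natCast, ← Real.rpow_mul hlam]
      norm_num [c]

lemma ContinuousLinearMap.spectrum_adjoint_comp_self_subset_Icc {H K : Type*}
    [NormedAddCommGroup H] [InnerProductSpace ℝ H] [CompleteSpace H]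
    [NormedAddCommGroup K] [InnerProductSpace ℝ K] [CompleteSpace K]
    (T : H →L[ℝ] K) (hT : ‖T‖ ≤ 1) :
    spectrum ℝ (adjoint T ∘L T) ⊆ Set.Icc 0 1 := by
  intro x hx
  refine ⟨spectrum_nonneg_of_nonneg
    ((nonneg_iff_isPositive _).mpr (isPositive_adjoint_comp_self T)) hx, ?_⟩
  have hnorm : ‖adjoint T ∘L T‖ * ‖(1 : H →L[ℝ] H)‖ ≤ 1 := by
    rw [norm_adjoint_comp_self]
    exact mul_le_one₀ (mul_le_one₀ hT (norm_nonneg _) hT) (norm_nonneg _) norm_id_le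
  have hx_norm := mem_closedBall_zero_iff.mp (spectrum.subset_closedBall_norm_mul _ hx)
  exact (le_abs_self x).trans ((Real.norm_eq_abs x ▸ hx_norm).trans hnorm)

section

variable {H : Type*} [NormedAddCommGroup H] [InnerProductSpace ℝ H] [CompleteSpace H]
  [ContinuousFunctionalCalculus ℝ (H →L[ℝ] H) IsSelfAdjoint]

lemma norm_cfc_apply_sq_le {A : H →L[ℝ] H} (hA : IsSelfAdjoint A) {f : ℝ → ℝ}
    (hf : ContinuousOn f (spectrum ℝ A)) {c : ℝ} (hfc : ∀ x ∈ spectrum ℝ A, f x ^ 2 ≤ c)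
    (v : H) : ‖cfc f A v‖ ^ 2 ≤ c * ‖v‖ ^ 2 := by
  -- Mathlib registers this Loewner-order instance only over `ℂ`.
  let _ := instStarOrderedRingRCLike (𝕜 := ℝ) (H := H)
  have hle : cfc f A ^ 2 ≤ algebraMap ℝ _ c := cfc_pow f 2 A ▸ cfc_le_algebraMap _ c A hfc
  have hinner : ⟪(cfc f A ^ 2) v, v⟫ = ‖cfc f A v‖ ^ 2 := by
    rw [sq, mul_apply_eq_comp, ← adjoint_inner_right, (cfc_predicate f A).adjoint_eq,
      real_inner_self_eq_norm_sq]
  have := ((le_def _ _).mp hle).inner_nonneg_left v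
  rw [sub_apply, inner_sub_left, hinner, Algebra.algebraMap_eq_smul_one, smul_apply,
    one_apply_eq_self, real_inner_smul_left, real_inner_self_eq_norm_sq] at this
  linarith

lemma tikhonov_step_sub {A : H →L[ℝ] H} (hA : IsSelfAdjoint A) {lam : ℝ}
    (hlam : -lam ∉ spectrum ℝ A) {x y h : H}
    (hy : (A + lam • ContinuousLinearMap.id ℝ H) y = A h + lam • x) :
    y - h = cfc (fun s => lam / (s + lam)) A (x - h) := by
  have hne : ∀ s ∈ spectrum ℝ A, s + lam ≠ 0 := fun s hs hzero =>
    hlam (eq_neg_of_add_eq_zero_left hzero ▸ hs)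
  have hinv_cont : ContinuousOn (fun s : ℝ => (s + lam)⁻¹) (spectrum ℝ A) :=
    (continuousOn_id.add continuousOn_const).inv₀ hne
  have hA_add : A + lam • ContinuousLinearMap.id ℝ H = cfc (fun s : ℝ => s + lam) A := by
    rw [cfc_add_const lam (fun s : ℝ => s) A, cfc_id' ℝ A, Algebra.algebraMap_eq_smul_one,
      one_def]
  have hinv : cfc (fun s : ℝ => (s + lam)⁻¹) A * (A + lam • ContinuousLinearMap.id ℝ H) = 1 := by
    rw [hA_add, ← cfc_mul _ _ A hinv_cont, cfc_congr (fun s hs => inv_mul_cancel₀ (hne s hs)),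
      ← Pi.one_def, cfc_one ℝ A]
  have hsub : (A + lam • ContinuousLinearMap.id ℝ H) (y - h) = lam • (x - h) := by
    rw [map_sub, hy, smul_sub, add_apply, smul_apply, id_apply]
    abel
  calc y - h
      = (cfc (fun s : ℝ => (s + lam)⁻¹) A * (A + lam • ContinuousLinearMap.id ℝ H)) (y - h) := by
        rw [hinv, one_apply_eq_self]
    _ = cfc (fun s => lam / (s + lam)) A (x - h) := by
        rw [mul_apply_eq_comp, hsub, map_smul, ← smul_apply, ← cfc_const_mul _ _ A hinv_cont]
        simp only [div_eq_mul_inv]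

lemma tikhonov_iterate_sub {A : H →L[ℝ] H} (hA : IsSelfAdjoint A) {lam : ℝ}
    (hlam : -lam ∉ spectrum ℝ A) {h₀ : H} (hs : ℕ → H) (h0 : hs 0 = 0)
    (hrec : ∀ t : ℕ, (A + lam • ContinuousLinearMap.id ℝ H) (hs (t + 1)) = A h₀ + lam • hs t)
    (t : ℕ) :
    hs t - h₀ = -((cfc (fun s => lam / (s + lam)) A ^ t) h₀) := by
  induction t with
  | zero => rw [h0, zero_sub, pow_zero, one_apply_eq_self]
  | succ t ih => rw [tikhonov_step_sub hA hlam (hrec t), ih, pow_succ', mul_apply_eq_comp, map_neg]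

end

/-- Strong-metric iterated Tikhonov regularization bias bound under the β-source condition:
with `‖T‖ ≤ 1`, `h₀ = (T*T)^(β/2) w₀` (fractional power via the continuous functional
calculus), `h_{*,0} = 0` and `(T*T + λ·id) h_{*,t} = T*T h₀ + λ h_{*,t−1}` for `t ≥ 1`,
one has `‖h_{*,t} − h₀‖² ≤ ‖w₀‖² λ^(min β (2t))` for every `t ≥ 1`. -/
theorem iterated_tikhonov_bias_strong_metric
    {H K : Type*} [NormedAddCommGroup H] [InnerProductSpace ℝ H] [CompleteSpace H]
    [NormedAddCommGroup K] [InnerProductSpace ℝ K] [CompleteSpace K]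
    [ContinuousFunctionalCalculus ℝ (H →L[ℝ] H) (IsSelfAdjoint : (H →L[ℝ] H) → Prop)]
    (T : H →L[ℝ] K) (hT : ‖T‖ ≤ 1)
    (β : ℝ) (hβ : 0 < β) (w₀ h₀ : H)
    (hsource : h₀ = cfc (fun x : ℝ => x ^ (β / 2)) (adjoint T ∘L T) w₀)
    (lam : ℝ) (hlam : 0 < lam)
    (hs : ℕ → H) (h0 : hs 0 = 0)
    (hrec : ∀ t : ℕ, (adjoint T ∘L T + lam • ContinuousLinearMap.id ℝ H) (hs (t + 1))
      = (adjoint T ∘L T) h₀ + lam • hs t) :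
    ∀ t : ℕ, 1 ≤ t → ‖hs t - h₀‖ ^ 2 ≤ ‖w₀‖ ^ 2 * lam ^ min β (2 * (t : ℝ)) := by
  intro t _
  set A := adjoint T ∘L T
  have hA : IsSelfAdjoint A := (isPositive_adjoint_comp_self T).isSelfAdjoint
  have hspec := T.spectrum_adjoint_comp_self_subset_Icc hT
  have hlam_notMem : -lam ∉ spectrum ℝ A := fun h => by linarith [(hspec h).1]
  have hfilter_cont : ContinuousOn (fun s : ℝ => lam / (s + lam)) (spectrum ℝ A) :=
    continuousOn_const.div (continuousOn_id.add continuousOn_const)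
      fun s hs => by linarith [(hspec hs).1]
  have hsource_cont : Continuous fun s : ℝ => s ^ (β / 2) :=
    Real.continuous_rpow_const (by positivity)
  have hpow_cont : ContinuousOn (fun s : ℝ => (lam / (s + lam)) ^ t) (spectrum ℝ A) :=
    hfilter_cont.pow t
  rw [tikhonov_iterate_sub hA hlam_notMem hs h0 hrec t, norm_neg, hsource,
    ← cfc_pow _ t A hfilter_cont, ← mul_apply_eq_comp,
    ← cfc_mul _ _ A hpow_cont hsource_cont.continuousOn, mul_comm (‖w₀‖ ^ 2)]
  exact norm_cfc_apply_sq_le hA (hpow_cont.mul hsource_cont.continuousOn)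
    (fun s hs => tikhonov_filter_sq_le t hβ.le hlam.le (hspec hs).1 (hspec hs).2) w₀
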